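/- For independent x₁ ~ N(μ₁, σ₁²) and x₂ ~ N(μ₂, σ₂²), the squared maximum mean discrepancy with the RBF kernel k(x,y) = exp(−(x−y)²/δ²) satisfies MMD²(N(μ₁,σ₁²), N(μ₂,σ₂²)) = δ/√(δ² + 4σ₁²) + δ/√(δ² + 4σ₂²) − 2δ·exp(−(μ₁−μ₂)²/(δ² + 2σ₁² + 2σ₂²))/√(δ² + 2σ₁² + 2σ₂²). -/

import Mathlib

open MeasureTheory ProbabilityTheory Real
open scoped NNReal

/-!
For independent `x ~ N(m₁, v₁)` and `y ~ N(m₂, v₂)` the difference `x - y` is distributed as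
`N(m₁ - m₂, v₁ + v₂)`, so each of the three kernel expectations is `E[exp (-z² / δ²)]` for a single
Gaussian `z`. Completing the square against the Gaussian density gives
`E[exp (-z² / s)] = √(s / (s + 2v)) · exp (-m² / (s + 2v))` for `z ~ N(m, v)`.
-/

lemma gaussianReal_prod_map_sub (m₁ m₂ : ℝ) (v₁ v₂ : ℝ≥0) :
    ((gaussianReal m₁ v₁).prod (gaussianReal m₂ v₂)).map (fun p ↦ p.1 - p.2) =
      gaussianReal (m₁ - m₂) (v₁ + v₂) := by
  rw [sub_eq_add_neg, ← gaussianReal_conv_gaussianReal, ← gaussianReal_map_neg, Measure.conv]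
  conv_rhs => rw [← Measure.map_id (μ := gaussianReal m₁ v₁),
    Measure.map_prod_map _ _ measurable_id measurable_neg, Measure.map_map (by fun_prop) (by fun_prop)]
  rfl

lemma integral_exp_neg_sq_div_gaussianReal (m : ℝ) (v : ℝ≥0) {s : ℝ} (hs : 0 < s) :
    ∫ x, exp (-x ^ 2 / s) ∂gaussianReal m v =
      √(s / (s + 2 * v)) * exp (-m ^ 2 / (s + 2 * v)) := by
  rcases eq_or_ne v 0 with rfl | hv
  · simp [gaussianReal_zero_var, hs.ne']
  set t := s + 2 * (v : ℝ) with ht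
  -- completing the square in the exponent
  have hexp : ∀ x : ℝ, gaussianPDFReal m v x • exp (-x ^ 2 / s) =
      ((√(2 * π * v))⁻¹ * exp (-m ^ 2 / t)) * exp (-(t / (2 * v * s)) * (x - m * s / t) ^ 2) := by
    intro x
    simp only [gaussianPDFReal, smul_eq_mul, mul_assoc, ← exp_add]
    congr 2
    rw [ht]
    field_simp
    ring
  simp_rw [integral_gaussianReal_eq_integral_smul hv, hexp]
  rw [integral_const_mul, integral_sub_right_eq_self (fun y ↦ exp (-(t / (2 * v * s)) * y ^ 2)),
    integral_gaussian, mul_right_comm, ← sqrt_inv, ← sqrt_mul (by positivity)]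
  congr 2
  field_simp

lemma integral_exp_neg_sq_sub_div_sq_gaussianReal_prod (m₁ m₂ : ℝ) (v₁ v₂ : ℝ≥0) {δ : ℝ}
    (hδ : 0 < δ) :
    ∫ p : ℝ × ℝ, exp (-(p.1 - p.2) ^ 2 / δ ^ 2) ∂(gaussianReal m₁ v₁).prod (gaussianReal m₂ v₂) =
      δ * exp (-(m₁ - m₂) ^ 2 / (δ ^ 2 + 2 * v₁ + 2 * v₂)) / √(δ ^ 2 + 2 * v₁ + 2 * v₂) := by
  rw [← integral_map (f := fun z ↦ exp (-z ^ 2 / δ ^ 2)) (by fun_prop) (by fun_prop),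
    gaussianReal_prod_map_sub, integral_exp_neg_sq_div_gaussianReal _ _ (by positivity),
    sqrt_div' _ (by positivity), sqrt_sq hδ.le, NNReal.coe_add, mul_add, ← add_assoc]
  ring

-- `rw` cannot instantiate the `ℝ≥0` version at the anonymous constructors `⟨σ ^ 2, _⟩`.
lemma integral_exp_neg_sq_sub_div_sq_gaussianReal_prod_stdDev (m₁ m₂ σ₁ σ₂ : ℝ) {δ : ℝ}
    (hδ : 0 < δ) :
    ∫ p : ℝ × ℝ, exp (-(p.1 - p.2) ^ 2 / δ ^ 2)
        ∂(gaussianReal m₁ ⟨σ₁ ^ 2, sq_nonneg σ₁⟩).prod (gaussianReal m₂ ⟨σ₂ ^ 2, sq_nonneg σ₂⟩) =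
      δ * exp (-(m₁ - m₂) ^ 2 / (δ ^ 2 + 2 * σ₁ ^ 2 + 2 * σ₂ ^ 2)) /
        √(δ ^ 2 + 2 * σ₁ ^ 2 + 2 * σ₂ ^ 2) :=
  integral_exp_neg_sq_sub_div_sq_gaussianReal_prod m₁ m₂ _ _ hδ

theorem gaussian_mmd_rbf_general (μ₁ μ₂ σ₁ σ₂ δ : ℝ)
    (hδ : 0 < δ) :
    (∫ p : ℝ × ℝ, Real.exp (-(p.1 - p.2) ^ 2 / δ ^ 2)
        ∂((gaussianReal μ₁ ⟨σ₁ ^ 2, sq_nonneg σ₁⟩).prod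
          (gaussianReal μ₁ ⟨σ₁ ^ 2, sq_nonneg σ₁⟩))) +
      (∫ p : ℝ × ℝ, Real.exp (-(p.1 - p.2) ^ 2 / δ ^ 2)
        ∂((gaussianReal μ₂ ⟨σ₂ ^ 2, sq_nonneg σ₂⟩).prod
          (gaussianReal μ₂ ⟨σ₂ ^ 2, sq_nonneg σ₂⟩))) -
      2 * (∫ p : ℝ × ℝ, Real.exp (-(p.1 - p.2) ^ 2 / δ ^ 2)
        ∂((gaussianReal μ₁ ⟨σ₁ ^ 2, sq_nonneg σ₁⟩).prod
          (gaussianReal μ₂ ⟨σ₂ ^ 2, sq_nonneg σ₂⟩))) =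
    δ / Real.sqrt (δ ^ 2 + 4 * σ₁ ^ 2) + δ / Real.sqrt (δ ^ 2 + 4 * σ₂ ^ 2) -
      2 * δ * Real.exp (-(μ₁ - μ₂) ^ 2 / (δ ^ 2 + 2 * σ₁ ^ 2 + 2 * σ₂ ^ 2)) /
        Real.sqrt (δ ^ 2 + 2 * σ₁ ^ 2 + 2 * σ₂ ^ 2) := by
  rw [integral_exp_neg_sq_sub_div_sq_gaussianReal_prod_stdDev _ _ _ _ hδ,
    integral_exp_neg_sq_sub_div_sq_gaussianReal_prod_stdDev _ _ _ _ hδ,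
    integral_exp_neg_sq_sub_div_sq_gaussianReal_prod_stdDev _ _ _ _ hδ]
  ring_nf
  rw [exp_zero]
  ring

/-- The squared MMD with RBF kernel k(x,y) = exp(−(x−y)²/δ²) between
N(μ₁,σ₁²) and N(μ₂,σ₂²):
MMD² = E_{x,x'~P}[k(x,x')] + E_{y,y'~Q}[k(y,y')] − 2E_{x~P,y~Q}[k(x,y)]
     = δ/√(δ²+4σ₁²) + δ/√(δ²+4σ₂²) − 2δ·exp(−(μ₁−μ₂)²/(δ²+2σ₁²+2σ₂²))/√(δ²+2σ₁²+2σ₂²). -/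
theorem gaussian_mmd_rbf (μ₁ μ₂ σ₁ σ₂ δ : ℝ)
    (hσ₁ : 0 < σ₁) (hσ₂ : 0 < σ₂) (hδ : 0 < δ) :
    (∫ p : ℝ × ℝ, Real.exp (-(p.1 - p.2) ^ 2 / δ ^ 2)
        ∂((gaussianReal μ₁ ⟨σ₁ ^ 2, sq_nonneg σ₁⟩).prod
          (gaussianReal μ₁ ⟨σ₁ ^ 2, sq_nonneg σ₁⟩))) +
      (∫ p : ℝ × ℝ, Real.exp (-(p.1 - p.2) ^ 2 / δ ^ 2)
        ∂((gaussianReal μ₂ ⟨σ₂ ^ 2, sq_nonneg σ₂⟩).prod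
          (gaussianReal μ₂ ⟨σ₂ ^ 2, sq_nonneg σ₂⟩))) -
      2 * (∫ p : ℝ × ℝ, Real.exp (-(p.1 - p.2) ^ 2 / δ ^ 2)
        ∂((gaussianReal μ₁ ⟨σ₁ ^ 2, sq_nonneg σ₁⟩).prod
          (gaussianReal μ₂ ⟨σ₂ ^ 2, sq_nonneg σ₂⟩))) =
    δ / Real.sqrt (δ ^ 2 + 4 * σ₁ ^ 2) + δ / Real.sqrt (δ ^ 2 + 4 * σ₂ ^ 2) -
      2 * δ * Real.exp (-(μ₁ - μ₂) ^ 2 / (δ ^ 2 + 2 * σ₁ ^ 2 + 2 * σ₂ ^ 2)) /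
        Real.sqrt (δ ^ 2 + 2 * σ₁ ^ 2 + 2 * σ₂ ^ 2) :=
  gaussian_mmd_rbf_general μ₁ μ₂ σ₁ σ₂ δ hδ
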